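/- The singular braid monoid SB_n admits a presentation as a monoid with generators σ₁, σ₁⁻¹, σ, σ⁻¹, x₁ and relations: σ₁σⁱσ₁σ⁻ⁱ = σⁱσ₁σ⁻ⁱσ₁ for 2 ≤ i ≤ n/2; σⁿ = (σσ₁)ⁿ⁻¹; x₁σⁱσ₁σ⁻ⁱ = σⁱσ₁σ⁻ⁱx₁ for i = 0 and 2 ≤ i ≤ n−2; x₁σⁱx₁σ⁻ⁱ = σⁱx₁σ⁻ⁱx₁ for 2 ≤ i ≤ n/2; σⁿx₁ = x₁σⁿ; x₁σσ₁σ⁻¹σ₁ = σσ₁σ⁻¹σ₁σx₁σ⁻¹; σ₁σ₁⁻¹ = σ₁⁻¹σ₁ = 1; σσ⁻¹ = σ⁻¹σ = 1. That is, this presented monoid is isomorphic to SB_n via σᵢ ↦ σⁱ⁻¹σ₁σ^{1−i} and xᵢ ↦ σⁱ⁻¹x₁σ^{1−i}. -/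

import Mathlib

/-- Generators of the singular braid monoid `SB_n`: `s i` is `σ_{i+1}`, `sInv i` is
`σ_{i+1}⁻¹`, and `x i` is `x_{i+1}`, for `i : Fin (n-1)`. -/
inductive SBGen (n : ℕ) : Type
  | s (i : Fin (n - 1))
  | sInv (i : Fin (n - 1))
  | x (i : Fin (n - 1))

open FreeMonoid in
/-- The defining relations of the singular braid monoid `SB_n`. -/
inductive SBRel (n : ℕ) : FreeMonoid (SBGen n) → FreeMonoid (SBGen n) → Prop
  | comm_ss (i j : Fin (n - 1)) (h : (i : ℕ) + 1 < (j : ℕ)) :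
      SBRel n (of (.s i) * of (.s j)) (of (.s j) * of (.s i))
  | comm_xx (i j : Fin (n - 1)) (h : (i : ℕ) + 1 < (j : ℕ)) :
      SBRel n (of (.x i) * of (.x j)) (of (.x j) * of (.x i))
  | comm_xs (i j : Fin (n - 1)) (h1 : (i : ℕ) ≠ (j : ℕ) + 1) (h2 : (j : ℕ) ≠ (i : ℕ) + 1) :
      SBRel n (of (.x i) * of (.s j)) (of (.s j) * of (.x i))
  | braid (i : ℕ) (h : i + 1 < n - 1) :
      SBRel n (of (.s ⟨i, by omega⟩) * of (.s ⟨i + 1, h⟩) * of (.s ⟨i, by omega⟩))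
        (of (.s ⟨i + 1, h⟩) * of (.s ⟨i, by omega⟩) * of (.s ⟨i + 1, h⟩))
  | mixed₁ (i : ℕ) (h : i + 1 < n - 1) :
      SBRel n (of (.s ⟨i, by omega⟩) * of (.s ⟨i + 1, h⟩) * of (.x ⟨i, by omega⟩))
        (of (.x ⟨i + 1, h⟩) * of (.s ⟨i, by omega⟩) * of (.s ⟨i + 1, h⟩))
  | mixed₂ (i : ℕ) (h : i + 1 < n - 1) :
      SBRel n (of (.s ⟨i + 1, h⟩) * of (.s ⟨i, by omega⟩) * of (.x ⟨i + 1, h⟩))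
        (of (.x ⟨i, by omega⟩) * of (.s ⟨i + 1, h⟩) * of (.s ⟨i, by omega⟩))
  | inv_right (i : Fin (n - 1)) : SBRel n (of (.s i) * of (.sInv i)) 1
  | inv_left (i : Fin (n - 1)) : SBRel n (of (.sInv i) * of (.s i)) 1

/-- The singular braid monoid `SB_n`. -/
def SingularBraidMonoid (n : ℕ) := PresentedMonoid (SBRel n)

instance (n : ℕ) : Monoid (SingularBraidMonoid n) :=
  inferInstanceAs (Monoid (PresentedMonoid (SBRel n)))

/-- The five generators of the two-generator-style presentation of `SB_n`:
`a = σ₁`, `aInv = σ₁⁻¹`, `b = σ`, `bInv = σ⁻¹`, `y = x₁`. -/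
inductive SBTwoGen : Type
  | a | aInv | b | bInv | y

open FreeMonoid in
/-- The relations of the Artin-style presentation of the singular braid monoid `SB_n`
with generators `σ₁, σ₁⁻¹, σ, σ⁻¹, x₁`. -/
inductive SBTwoRel (n : ℕ) : FreeMonoid SBTwoGen → FreeMonoid SBTwoGen → Prop
  | r₁ (i : ℕ) (h₁ : 2 ≤ i) (h₂ : i ≤ n / 2) :
      SBTwoRel n (of .a * of .b ^ i * of .a * of .bInv ^ i)
        (of .b ^ i * of .a * of .bInv ^ i * of .a)
  | r₂ : SBTwoRel n (of .b ^ n) ((of .b * of .a) ^ (n - 1))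
  | r₃ (i : ℕ) (h : i = 0 ∨ (2 ≤ i ∧ i ≤ n - 2)) :
      SBTwoRel n (of .y * (of .b ^ i * of .a * of .bInv ^ i))
        (of .b ^ i * of .a * of .bInv ^ i * of .y)
  | r₄ (i : ℕ) (h₁ : 2 ≤ i) (h₂ : i ≤ n / 2) :
      SBTwoRel n (of .y * of .b ^ i * of .y * of .bInv ^ i)
        (of .b ^ i * of .y * of .bInv ^ i * of .y)
  | r₅ : SBTwoRel n (of .b ^ n * of .y) (of .y * of .b ^ n)
  | r₆ : SBTwoRel n (of .y * of .b * of .a * of .bInv * of .a)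
      (of .b * of .a * of .bInv * of .a * of .b * of .y * of .bInv)
  | r₇ : SBTwoRel n (of .a * of .aInv) 1
  | r₈ : SBTwoRel n (of .aInv * of .a) 1
  | r₉ : SBTwoRel n (of .b * of .bInv) 1
  | r₁₀ : SBTwoRel n (of .bInv * of .b) 1


section Helpers

variable {M : Type*} [Monoid M]

theorem pm_sound {α : Type*} {rels : FreeMonoid α → FreeMonoid α → Prop} {a b : FreeMonoid α}
    (h : rels a b) : PresentedMonoid.mk rels a = PresentedMonoid.mk rels b :=
  Quotient.sound (ConGen.Rel.of a b h)

theorem inv_uniq {u v w : M} (h1 : u * v = 1) (h2 : w * u = 1) : v = w := by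
  rw [← one_mul v, ← h2, mul_assoc, h1, mul_one]

theorem cancel_right {u v : M} (h1 : u * v = 1) {a b : M} (h : a * u = b * u) : a = b := by
  have h' := congrArg (· * v) h
  simpa [mul_assoc, h1] using h'

theorem cancel_left {u v : M} (h1 : v * u = 1) {a b : M} (h : u * a = u * b) : a = b := by
  have h' := congrArg (v * ·) h
  simpa [← mul_assoc, h1] using h'

theorem comm_inv {u v a : M} (hu : u * v = 1) (hv : v * u = 1) (h : a * u = u * a) :
    a * v = v * a := by
  calc a * v = (v * u) * (a * v) := by rw [hv, one_mul]
  _ = v * ((u * a) * v) := by simp [mul_assoc]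
  _ = v * ((a * u) * v) := by rw [h]
  _ = (v * a) * (u * v) := by simp [mul_assoc]
  _ = v * a := by rw [hu, mul_one]

theorem pair_pow {u v : M} (hu : u * v = 1) (hv : v * u = 1) (k : ℕ) : u ^ k * v ^ k = 1 := by
  induction k with
  | zero => simp
  | succ k ih =>
    rw [pow_succ' u, pow_succ v]
    calc u * u ^ k * (v ^ k * v) = u * (u ^ k * v ^ k) * v := by simp [mul_assoc]
    _ = 1 := by rw [ih, mul_one, hu]

theorem shift_pow (a b : M) (k : ℕ) : a * (b * a) ^ k = (a * b) ^ k * a := by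
  induction k with
  | zero => simp
  | succ k ih =>
    rw [pow_succ', pow_succ]
    calc a * (b * a * (b * a) ^ k) = (a * b) * (a * (b * a) ^ k) := by simp [mul_assoc]
    _ = (a * b) * ((a * b) ^ k * a) := by rw [ih]
    _ = (a * b) ^ (k + 1) * a := by rw [← mul_assoc, ← pow_succ']
    _ = (a * b) ^ k * (a * b) * a := by rw [pow_succ]

end Helpers

namespace SBAux
open PresentedMonoid

def Sg (n i : ℕ) : SingularBraidMonoid n :=
  (if h : i < n - 1 then PresentedMonoid.of (SBRel n) (.s ⟨i, h⟩) else 1 :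
    PresentedMonoid (SBRel n))
def Tg (n i : ℕ) : SingularBraidMonoid n :=
  (if h : i < n - 1 then PresentedMonoid.of (SBRel n) (.sInv ⟨i, h⟩) else 1 :
    PresentedMonoid (SBRel n))
def Xg (n i : ℕ) : SingularBraidMonoid n :=
  (if h : i < n - 1 then PresentedMonoid.of (SBRel n) (.x ⟨i, h⟩) else 1 :
    PresentedMonoid (SBRel n))

variable {n : ℕ}

theorem s_t (i : ℕ) : Sg n i * Tg n i = 1 := by
  by_cases h : i < n - 1
  · rw [Sg, Tg, dif_pos h, dif_pos h]
    exact pm_sound (SBRel.inv_right ⟨i, h⟩)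
  · rw [Sg, Tg, dif_neg h, dif_neg h]
    exact one_mul _

theorem t_s (i : ℕ) : Tg n i * Sg n i = 1 := by
  by_cases h : i < n - 1
  · rw [Sg, Tg, dif_pos h, dif_pos h]
    exact pm_sound (SBRel.inv_left ⟨i, h⟩)
  · rw [Sg, Tg, dif_neg h, dif_neg h]
    exact one_mul _

theorem ss_comm {i j : ℕ} (h : i + 1 < j) : Sg n i * Sg n j = Sg n j * Sg n i := by
  by_cases hj : j < n - 1
  · have hi : i < n - 1 := by omega
    rw [Sg, Sg, dif_pos hj, dif_pos hi]
    exact pm_sound (SBRel.comm_ss ⟨i, hi⟩ ⟨j, hj⟩ h)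
  · rw [Sg, Sg, dif_neg hj]
    exact (mul_one _).trans (one_mul _).symm

theorem xx_comm {i j : ℕ} (h : i + 1 < j) : Xg n i * Xg n j = Xg n j * Xg n i := by
  by_cases hj : j < n - 1
  · have hi : i < n - 1 := by omega
    rw [Xg, Xg, dif_pos hj, dif_pos hi]
    exact pm_sound (SBRel.comm_xx ⟨i, hi⟩ ⟨j, hj⟩ h)
  · rw [Xg, Xg, dif_neg hj]
    exact (mul_one _).trans (one_mul _).symm

theorem xs_comm {i j : ℕ} (h1 : i ≠ j + 1) (h2 : j ≠ i + 1) :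
    Xg n i * Sg n j = Sg n j * Xg n i := by
  by_cases hi : i < n - 1
  · by_cases hj : j < n - 1
    · rw [Xg, Sg, dif_pos hj, dif_pos hi]
      exact pm_sound (SBRel.comm_xs ⟨i, hi⟩ ⟨j, hj⟩ h1 h2)
    · rw [Sg, dif_neg hj]
      exact (mul_one _).trans (one_mul _).symm
  · rw [Xg, dif_neg hi]
    exact (one_mul _).trans (mul_one _).symm

theorem xt_comm {i j : ℕ} (h1 : i ≠ j + 1) (h2 : j ≠ i + 1) :
    Xg n i * Tg n j = Tg n j * Xg n i :=
  comm_inv (s_t j) (t_s j) (xs_comm h1 h2)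

theorem braid {i : ℕ} (h : i + 1 < n - 1) :
    Sg n i * Sg n (i + 1) * Sg n i = Sg n (i + 1) * Sg n i * Sg n (i + 1) := by
  have hi : i < n - 1 := by omega
  rw [Sg, Sg, dif_pos h, dif_pos hi]
  exact pm_sound (SBRel.braid i h)

theorem mixed₁ {i : ℕ} (h : i + 1 < n - 1) :
    Sg n i * Sg n (i + 1) * Xg n i = Xg n (i + 1) * Sg n i * Sg n (i + 1) := by
  have hi : i < n - 1 := by omega
  rw [Sg, Sg, Xg, Xg, dif_pos h, dif_pos hi, dif_pos h, dif_pos hi]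
  exact pm_sound (SBRel.mixed₁ i h)

theorem mixed₂ {i : ℕ} (h : i + 1 < n - 1) :
    Sg n (i + 1) * Sg n i * Xg n (i + 1) = Xg n i * Sg n (i + 1) * Sg n i := by
  have hi : i < n - 1 := by omega
  rw [Sg, Sg, Xg, Xg, dif_pos h, dif_pos hi, dif_pos h, dif_pos hi]
  exact pm_sound (SBRel.mixed₂ i h)

def ascS (n : ℕ) : ℕ → ℕ → SingularBraidMonoid n
  | _, 0 => 1
  | a, m + 1 => Sg n a * ascS n (a + 1) m

def dscS (n : ℕ) : ℕ → ℕ → SingularBraidMonoid n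
  | _, 0 => 1
  | k, m + 1 => Sg n k * dscS n (k - 1) m

def dTasc (n : ℕ) : ℕ → ℕ → SingularBraidMonoid n
  | _, 0 => 1
  | a, m + 1 => dTasc n (a + 1) m * Tg n a

theorem ascS_snoc (a m : ℕ) : ascS n a (m + 1) = ascS n a m * Sg n (a + m) := by
  induction m generalizing a with
  | zero => simp [ascS]
  | succ m ih =>
    have e : a + 1 + m = a + (m + 1) := by omega
    rw [ascS, ih (a + 1), e, ascS, mul_assoc]

theorem ascS_dTasc (a m : ℕ) : ascS n a m * dTasc n a m = 1 := by
  induction m generalizing a with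
  | zero => simp [ascS, dTasc]
  | succ m ih =>
    rw [ascS, dTasc]
    calc Sg n a * ascS n (a + 1) m * (dTasc n (a + 1) m * Tg n a)
        = Sg n a * (ascS n (a + 1) m * dTasc n (a + 1) m) * Tg n a := by simp [mul_assoc]
    _ = 1 := by rw [ih, mul_one, s_t]

theorem dTasc_ascS (a m : ℕ) : dTasc n a m * ascS n a m = 1 := by
  induction m generalizing a with
  | zero => simp [ascS, dTasc]
  | succ m ih =>
    rw [ascS, dTasc]
    calc dTasc n (a + 1) m * Tg n a * (Sg n a * ascS n (a + 1) m)
        = dTasc n (a + 1) m * (Tg n a * Sg n a) * ascS n (a + 1) m := by simp [mul_assoc]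
    _ = 1 := by rw [t_s, mul_one, ih]

theorem s_hi_ascS {i : ℕ} (a m : ℕ) (h : a + m ≤ i) :
    Sg n (i + 1) * ascS n a m = ascS n a m * Sg n (i + 1) := by
  induction m generalizing a with
  | zero => simp [ascS]
  | succ m ih =>
    rw [ascS, ← mul_assoc, ← ss_comm (by omega : a + 1 < i + 1), mul_assoc, ih (a+1) (by omega),
      mul_assoc]

theorem x_hi_ascS {i : ℕ} (a m : ℕ) (h : a + m ≤ i) :
    Xg n (i + 1) * ascS n a m = ascS n a m * Xg n (i + 1) := by
  induction m generalizing a with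
  | zero => simp [ascS]
  | succ m ih =>
    rw [ascS, ← mul_assoc, xs_comm (by omega) (by omega), mul_assoc, ih (a+1) (by omega),
      mul_assoc]

theorem x0_ascS (a m : ℕ) (h : 2 ≤ a) :
    Xg n 0 * ascS n a m = ascS n a m * Xg n 0 := by
  induction m generalizing a with
  | zero => simp [ascS]
  | succ m ih =>
    rw [ascS, ← mul_assoc, xs_comm (by omega) (by omega), mul_assoc, ih (a+1) (by omega),
      mul_assoc]

theorem shift_s {i m : ℕ} (h1 : i + 2 ≤ m) (h2 : m ≤ n - 1) :
    Sg n (i + 1) * ascS n 0 m = ascS n 0 m * Sg n i := by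
  induction m with
  | zero => omega
  | succ m ih =>
    rcases Nat.lt_or_ge (i + 2) (m + 1) with hm | hm
    · -- step case : i + 2 ≤ m
      rw [ascS_snoc, ← mul_assoc, ih (by omega) (by omega), mul_assoc, mul_assoc]
      congr 1
      exact ss_comm (by omega)
    · -- base case : m + 1 = i + 2, i.e. m = i + 1
      have hmi : m = i + 1 := by omega
      subst hmi
      rw [ascS_snoc, ascS_snoc]
      simp only [Nat.zero_add]
      -- goal : Sg (i+1) * (ascS 0 i * Sg i * Sg (i+1)) = ascS 0 i * Sg i * Sg (i+1) * Sg i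
      calc Sg n (i + 1) * (ascS n 0 i * Sg n i * Sg n (i + 1))
          = (Sg n (i + 1) * ascS n 0 i) * (Sg n i * Sg n (i + 1)) := by simp [mul_assoc]
      _ = (ascS n 0 i * Sg n (i + 1)) * (Sg n i * Sg n (i + 1)) := by
          rw [s_hi_ascS 0 i (by omega)]
      _ = ascS n 0 i * (Sg n (i + 1) * Sg n i * Sg n (i + 1)) := by simp [mul_assoc]
      _ = ascS n 0 i * (Sg n i * Sg n (i + 1) * Sg n i) := by rw [braid (by omega)]
      _ = ascS n 0 i * Sg n i * Sg n (i + 1) * Sg n i := by simp [mul_assoc]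

theorem shift_x {i m : ℕ} (h1 : i + 2 ≤ m) (h2 : m ≤ n - 1) :
    Xg n (i + 1) * ascS n 0 m = ascS n 0 m * Xg n i := by
  induction m with
  | zero => omega
  | succ m ih =>
    rcases Nat.lt_or_ge (i + 2) (m + 1) with hm | hm
    · rw [ascS_snoc, ← mul_assoc, ih (by omega) (by omega), mul_assoc, mul_assoc]
      congr 1
      exact xs_comm (by omega) (by omega)
    · have hmi : m = i + 1 := by omega
      subst hmi
      rw [ascS_snoc, ascS_snoc]
      simp only [Nat.zero_add]
      calc Xg n (i + 1) * (ascS n 0 i * Sg n i * Sg n (i + 1))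
          = (Xg n (i + 1) * ascS n 0 i) * (Sg n i * Sg n (i + 1)) := by simp [mul_assoc]
      _ = (ascS n 0 i * Xg n (i + 1)) * (Sg n i * Sg n (i + 1)) := by
          rw [x_hi_ascS 0 i (by omega)]
      _ = ascS n 0 i * (Xg n (i + 1) * Sg n i * Sg n (i + 1)) := by simp [mul_assoc]
      _ = ascS n 0 i * (Sg n i * Sg n (i + 1) * Xg n i) := by rw [mixed₁ (by omega)]
      _ = ascS n 0 i * Sg n i * Sg n (i + 1) * Xg n i := by simp [mul_assoc]

theorem dsc_shift (j : ℕ) : ∀ k m : ℕ, j ≤ k → k + 1 ≤ m → m ≤ n - 1 →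
    dscS n k j * ascS n 0 m = ascS n 0 m * dscS n (k - 1) j := by
  induction j with
  | zero => intro k m _ _ _; simp [dscS]
  | succ j ih =>
    intro k m hjk hkm hm
    obtain ⟨k', rfl⟩ : ∃ k', k = k' + 1 := ⟨k - 1, by omega⟩
    show Sg n (k' + 1) * dscS n k' j * ascS n 0 m = ascS n 0 m * dscS n (k' + 1 - 1) (j + 1)
    have e : k' + 1 - 1 = k' := by omega
    rw [e]
    calc Sg n (k' + 1) * dscS n k' j * ascS n 0 m
        = Sg n (k' + 1) * (dscS n k' j * ascS n 0 m) := by rw [mul_assoc]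
    _ = Sg n (k' + 1) * (ascS n 0 m * dscS n (k' - 1) j) := by
        rw [ih k' m (by omega) (by omega) hm]
    _ = (Sg n (k' + 1) * ascS n 0 m) * dscS n (k' - 1) j := by rw [mul_assoc]
    _ = (ascS n 0 m * Sg n k') * dscS n (k' - 1) j := by rw [shift_s (by omega) hm]
    _ = ascS n 0 m * dscS n k' (j + 1) := by rw [mul_assoc]; rfl

theorem zid {m j : ℕ} (hj : j ≤ m + 1) (hm : m + 1 ≤ n - 1) :
    ascS n 0 (m + 1) ^ j = ascS n 0 m ^ j * dscS n m j := by
  induction j with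
  | zero => simp [dscS]
  | succ j ih =>
    have snoc : ascS n 0 (m + 1) = ascS n 0 m * Sg n m := by
      rw [ascS_snoc]; norm_num
    calc ascS n 0 (m + 1) ^ (j + 1) = ascS n 0 (m + 1) ^ j * ascS n 0 (m + 1) := pow_succ _ _
    _ = ascS n 0 m ^ j * dscS n m j * ascS n 0 (m + 1) := by rw [ih (by omega)]
    _ = ascS n 0 m ^ j * (dscS n m j * ascS n 0 (m + 1)) := by rw [mul_assoc]
    _ = ascS n 0 m ^ j * (ascS n 0 (m + 1) * dscS n (m - 1) j) := by
        rw [dsc_shift j m (m + 1) (by omega) (by omega) hm]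
    _ = ascS n 0 m ^ j * (ascS n 0 m * (Sg n m * dscS n (m - 1) j)) := by
        rw [snoc, mul_assoc]
    _ = (ascS n 0 m ^ j * ascS n 0 m) * (Sg n m * dscS n (m - 1) j) := by
        simp [mul_assoc]
    _ = ascS n 0 m ^ (j + 1) * dscS n m (j + 1) := by rw [← pow_succ]; rfl

theorem x0_dscS (m : ℕ) : ∀ k, m + 1 ≤ k → Xg n 0 * dscS n k m = dscS n k m * Xg n 0 := by
  induction m with
  | zero => intro k _; simp [dscS]
  | succ m ih =>
    intro k hk
    show Xg n 0 * (Sg n k * dscS n (k - 1) m) = (Sg n k * dscS n (k - 1) m) * Xg n 0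
    rw [← mul_assoc, xs_comm (by omega) (by omega), mul_assoc, ih (k - 1) (by omega),
      mul_assoc]

theorem x0_drds_aux (m : ℕ) (h2 : 2 ≤ m) (hm : m ≤ n - 1) :
    Xg n 0 * (dscS n (m - 1) m * ascS n 0 m) = (dscS n (m - 1) m * ascS n 0 m) * Xg n 0 := by
  induction m, h2 using Nat.le_induction with
  | base =>
    have h3 : 1 < n - 1 := by omega
    show Xg n 0 * (Sg n 1 * (Sg n (1 - 1) * dscS n (1 - 1 - 1) 0) * ascS n 0 2)
      = (Sg n 1 * (Sg n (1 - 1) * dscS n (1 - 1 - 1) 0) * ascS n 0 2) * Xg n 0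
    have e2 : ascS n 0 2 = Sg n 0 * (Sg n 1 * 1) := rfl
    simp only [show (1:ℕ) - 1 = 0 from rfl, show (0:ℕ) - 1 = 0 from rfl, dscS, e2, mul_one]
    calc Xg n 0 * (Sg n 1 * Sg n 0 * (Sg n 0 * Sg n 1))
        = (Xg n 0 * Sg n 1 * Sg n 0) * (Sg n 0 * Sg n 1) := by simp [mul_assoc]
    _ = (Sg n 1 * Sg n 0 * Xg n 1) * (Sg n 0 * Sg n 1) := by rw [← mixed₂ h3]
    _ = (Sg n 1 * Sg n 0) * (Xg n 1 * Sg n 0 * Sg n 1) := by simp [mul_assoc]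
    _ = (Sg n 1 * Sg n 0) * (Sg n 0 * Sg n 1 * Xg n 0) := by rw [← mixed₁ h3]
    _ = Sg n 1 * Sg n 0 * (Sg n 0 * Sg n 1) * Xg n 0 := by simp [mul_assoc]
  | succ m h2 ih =>
    have hm' : m ≤ n - 1 := by omega
    have snoc : ascS n 0 (m + 1) = ascS n 0 m * Sg n m := by rw [ascS_snoc]; norm_num
    have e : m + 1 - 1 = m := by omega
    rw [e]
    show Xg n 0 * (Sg n m * dscS n (m - 1) m * ascS n 0 (m + 1))
      = (Sg n m * dscS n (m - 1) m * ascS n 0 (m + 1)) * Xg n 0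
    rw [snoc]
    calc Xg n 0 * (Sg n m * dscS n (m - 1) m * (ascS n 0 m * Sg n m))
        = (Xg n 0 * Sg n m) * (dscS n (m - 1) m * ascS n 0 m) * Sg n m := by simp [mul_assoc]
    _ = (Sg n m * Xg n 0) * (dscS n (m - 1) m * ascS n 0 m) * Sg n m := by
        rw [xs_comm (by omega) (by omega)]
    _ = Sg n m * (Xg n 0 * (dscS n (m - 1) m * ascS n 0 m)) * Sg n m := by simp [mul_assoc]
    _ = Sg n m * ((dscS n (m - 1) m * ascS n 0 m) * Xg n 0) * Sg n m := by rw [ih hm']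
    _ = Sg n m * (dscS n (m - 1) m * ascS n 0 m) * (Xg n 0 * Sg n m) := by simp [mul_assoc]
    _ = Sg n m * (dscS n (m - 1) m * ascS n 0 m) * (Sg n m * Xg n 0) := by
        rw [xs_comm (by omega) (by omega)]
    _ = Sg n m * dscS n (m - 1) m * (ascS n 0 m * Sg n m) * Xg n 0 := by simp [mul_assoc]

theorem x0_drds (m : ℕ) (hm : m ≤ n - 1) :
    Xg n 0 * (dscS n (m - 1) m * ascS n 0 m) = (dscS n (m - 1) m * ascS n 0 m) * Xg n 0 := by
  match m with
  | 0 => simp [dscS, ascS]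
  | 1 =>
    have hc : Xg n 0 * Sg n 0 = Sg n 0 * Xg n 0 := xs_comm (by omega) (by omega)
    show Xg n 0 * ((Sg n 0 * 1) * (Sg n 0 * 1)) = ((Sg n 0 * 1) * (Sg n 0 * 1)) * Xg n 0
    simp only [mul_one]
    calc Xg n 0 * (Sg n 0 * Sg n 0) = (Xg n 0 * Sg n 0) * Sg n 0 := (mul_assoc _ _ _).symm
    _ = (Sg n 0 * Xg n 0) * Sg n 0 := by rw [hc]
    _ = Sg n 0 * (Xg n 0 * Sg n 0) := mul_assoc _ _ _
    _ = Sg n 0 * (Sg n 0 * Xg n 0) := by rw [hc]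
    _ = Sg n 0 * Sg n 0 * Xg n 0 := (mul_assoc _ _ _).symm
  | (m + 2) => exact x0_drds_aux (m + 2) (by omega) hm

theorem twist (m : ℕ) (hm : m ≤ n - 1) :
    Xg n 0 * ascS n 0 m ^ (m + 1) = ascS n 0 m ^ (m + 1) * Xg n 0 := by
  induction m with
  | zero => simp [ascS]
  | succ m ih =>
    have hm' : m ≤ n - 1 := by omega
    have hz : ascS n 0 (m + 1) ^ (m + 1) = ascS n 0 m ^ (m + 1) * dscS n m (m + 1) :=
      zid le_rfl hm
    have hd : Xg n 0 * (dscS n m (m + 1) * ascS n 0 (m + 1))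
        = (dscS n m (m + 1) * ascS n 0 (m + 1)) * Xg n 0 := by
      have := x0_drds (m + 1) hm
      rwa [show m + 1 - 1 = m from rfl] at this
    calc Xg n 0 * ascS n 0 (m + 1) ^ (m + 2)
        = Xg n 0 * (ascS n 0 (m + 1) ^ (m + 1) * ascS n 0 (m + 1)) := by rw [pow_succ]
    _ = (Xg n 0 * ascS n 0 m ^ (m + 1)) * (dscS n m (m + 1) * ascS n 0 (m + 1)) := by
        rw [hz]; simp [mul_assoc]
    _ = (ascS n 0 m ^ (m + 1) * Xg n 0) * (dscS n m (m + 1) * ascS n 0 (m + 1)) := by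
        rw [ih hm']
    _ = ascS n 0 m ^ (m + 1) * (Xg n 0 * (dscS n m (m + 1) * ascS n 0 (m + 1))) := by
        simp [mul_assoc]
    _ = ascS n 0 m ^ (m + 1) * (dscS n m (m + 1) * ascS n 0 (m + 1)) * Xg n 0 := by
        rw [hd]; simp [mul_assoc]
    _ = (ascS n 0 m ^ (m + 1) * dscS n m (m + 1)) * ascS n 0 (m + 1) * Xg n 0 := by
        simp [mul_assoc]
    _ = ascS n 0 (m + 1) ^ (m + 1) * ascS n 0 (m + 1) * Xg n 0 := by rw [hz]
    _ = ascS n 0 (m + 1) ^ (m + 2) * Xg n 0 := by rw [← pow_succ]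

theorem spow {i : ℕ} (h : i ≤ n - 2) :
    Sg n i * ascS n 0 (n - 1) ^ i = ascS n 0 (n - 1) ^ i * Sg n 0 := by
  induction i with
  | zero => simp
  | succ i ih =>
    rw [pow_succ']
    calc Sg n (i + 1) * (ascS n 0 (n - 1) * ascS n 0 (n - 1) ^ i)
        = (Sg n (i + 1) * ascS n 0 (n - 1)) * ascS n 0 (n - 1) ^ i := by rw [mul_assoc]
    _ = (ascS n 0 (n - 1) * Sg n i) * ascS n 0 (n - 1) ^ i := by
        rw [shift_s (by omega) le_rfl]
    _ = ascS n 0 (n - 1) * (Sg n i * ascS n 0 (n - 1) ^ i) := by rw [mul_assoc]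
    _ = ascS n 0 (n - 1) * (ascS n 0 (n - 1) ^ i * Sg n 0) := by rw [ih (by omega)]
    _ = ascS n 0 (n - 1) * ascS n 0 (n - 1) ^ i * Sg n 0 := by simp [mul_assoc]

theorem xpow {i : ℕ} (h : i ≤ n - 2) :
    Xg n i * ascS n 0 (n - 1) ^ i = ascS n 0 (n - 1) ^ i * Xg n 0 := by
  induction i with
  | zero => simp
  | succ i ih =>
    rw [pow_succ']
    calc Xg n (i + 1) * (ascS n 0 (n - 1) * ascS n 0 (n - 1) ^ i)
        = (Xg n (i + 1) * ascS n 0 (n - 1)) * ascS n 0 (n - 1) ^ i := by rw [mul_assoc]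
    _ = (ascS n 0 (n - 1) * Xg n i) * ascS n 0 (n - 1) ^ i := by
        rw [shift_x (by omega) le_rfl]
    _ = ascS n 0 (n - 1) * (Xg n i * ascS n 0 (n - 1) ^ i) := by rw [mul_assoc]
    _ = ascS n 0 (n - 1) * (ascS n 0 (n - 1) ^ i * Xg n 0) := by rw [ih (by omega)]
    _ = ascS n 0 (n - 1) * ascS n 0 (n - 1) ^ i * Xg n 0 := by simp [mul_assoc]

theorem del_dti_pow (i : ℕ) : ascS n 0 (n - 1) ^ i * dTasc n 0 (n - 1) ^ i = 1 :=
  pair_pow (ascS_dTasc 0 (n - 1)) (dTasc_ascS 0 (n - 1)) i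

theorem dti_del_pow (i : ℕ) : dTasc n 0 (n - 1) ^ i * ascS n 0 (n - 1) ^ i = 1 :=
  pair_pow (dTasc_ascS 0 (n - 1)) (ascS_dTasc 0 (n - 1)) i

theorem conj_s {i : ℕ} (h : i ≤ n - 2) :
    ascS n 0 (n - 1) ^ i * Sg n 0 * dTasc n 0 (n - 1) ^ i = Sg n i := by
  rw [← spow h, mul_assoc, del_dti_pow, mul_one]

theorem conj_x {i : ℕ} (h : i ≤ n - 2) :
    ascS n 0 (n - 1) ^ i * Xg n 0 * dTasc n 0 (n - 1) ^ i = Xg n i := by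
  rw [← xpow h, mul_assoc, del_dti_pow, mul_one]

theorem conj_t {i : ℕ} (h : i ≤ n - 2) :
    ascS n 0 (n - 1) ^ i * Tg n 0 * dTasc n 0 (n - 1) ^ i = Tg n i := by
  have hcomm : dTasc n 0 (n - 1) ^ i * Sg n i = Sg n 0 * dTasc n 0 (n - 1) ^ i := by
    calc dTasc n 0 (n - 1) ^ i * Sg n i
        = dTasc n 0 (n - 1) ^ i * Sg n i * (ascS n 0 (n - 1) ^ i * dTasc n 0 (n - 1) ^ i) := by
          rw [del_dti_pow, mul_one]
    _ = dTasc n 0 (n - 1) ^ i * ((Sg n i * ascS n 0 (n - 1) ^ i) * dTasc n 0 (n - 1) ^ i) := by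
        simp [mul_assoc]
    _ = dTasc n 0 (n - 1) ^ i * ((ascS n 0 (n - 1) ^ i * Sg n 0) * dTasc n 0 (n - 1) ^ i) := by
        rw [spow h]
    _ = (dTasc n 0 (n - 1) ^ i * ascS n 0 (n - 1) ^ i) * (Sg n 0 * dTasc n 0 (n - 1) ^ i) := by
        simp [mul_assoc]
    _ = Sg n 0 * dTasc n 0 (n - 1) ^ i := by rw [dti_del_pow, one_mul]
  have hus : (ascS n 0 (n - 1) ^ i * Tg n 0 * dTasc n 0 (n - 1) ^ i) * Sg n i = 1 := by
    calc (ascS n 0 (n - 1) ^ i * Tg n 0 * dTasc n 0 (n - 1) ^ i) * Sg n i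
        = ascS n 0 (n - 1) ^ i * Tg n 0 * (dTasc n 0 (n - 1) ^ i * Sg n i) := by
          simp [mul_assoc]
    _ = ascS n 0 (n - 1) ^ i * ((Tg n 0 * Sg n 0) * dTasc n 0 (n - 1) ^ i) := by
        rw [hcomm]; simp [mul_assoc]
    _ = 1 := by rw [t_s, one_mul, del_dti_pow]
  exact (inv_uniq (s_t i) hus).symm

theorem ascR (j : ℕ) (hj : j ≤ n - 1) :
    ascS n (n - 1 - j) j * ascS n 0 (n - 1) ^ (n - 1)
      = ascS n 0 (n - 1) ^ (n - 1 - j) * (Sg n 0 * ascS n 0 (n - 1)) ^ j := by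
  induction j with
  | zero => simp [ascS]
  | succ j ih =>
    obtain ⟨c, hc⟩ : ∃ c, c = n - 1 - (j + 1) := ⟨_, rfl⟩
    have e1 : c + 1 = n - 1 - j := by omega
    have e2 : n - 1 - j = c + 1 := by omega
    rw [← hc]
    show Sg n c * ascS n (c + 1) j * ascS n 0 (n - 1) ^ (n - 1)
      = ascS n 0 (n - 1) ^ c * (Sg n 0 * ascS n 0 (n - 1)) ^ (j + 1)
    calc Sg n c * ascS n (c + 1) j * ascS n 0 (n - 1) ^ (n - 1)
        = Sg n c * (ascS n (n - 1 - j) j * ascS n 0 (n - 1) ^ (n - 1)) := by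
          rw [e1, mul_assoc]
    _ = Sg n c * (ascS n 0 (n - 1) ^ (n - 1 - j) * (Sg n 0 * ascS n 0 (n - 1)) ^ j) := by
        rw [ih (by omega)]
    _ = (Sg n c * ascS n 0 (n - 1) ^ c) * (ascS n 0 (n - 1)
          * (Sg n 0 * ascS n 0 (n - 1)) ^ j) := by
        rw [e2, pow_succ]; simp [mul_assoc]
    _ = (ascS n 0 (n - 1) ^ c * Sg n 0) * (ascS n 0 (n - 1)
          * (Sg n 0 * ascS n 0 (n - 1)) ^ j) := by
        rw [spow (by omega)]
    _ = ascS n 0 (n - 1) ^ c * ((Sg n 0 * ascS n 0 (n - 1))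
          * (Sg n 0 * ascS n 0 (n - 1)) ^ j) := by simp [mul_assoc]
    _ = ascS n 0 (n - 1) ^ c * (Sg n 0 * ascS n 0 (n - 1)) ^ (j + 1) := by rw [← pow_succ']

theorem r2img (hn : 2 ≤ n) :
    ascS n 0 (n - 1) ^ n = (ascS n 0 (n - 1) * Sg n 0) ^ (n - 1) := by
  have h0 := ascR (n - 1) le_rfl
  rw [Nat.sub_self, pow_zero, one_mul] at h0
  have h1 : ascS n 0 (n - 1) ^ n = (Sg n 0 * ascS n 0 (n - 1)) ^ (n - 1) := by
    calc ascS n 0 (n - 1) ^ n = ascS n 0 (n - 1) * ascS n 0 (n - 1) ^ (n - 1) := by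
          rw [← pow_succ']; congr 1; omega
    _ = (Sg n 0 * ascS n 0 (n - 1)) ^ (n - 1) := h0
  apply cancel_right (ascS_dTasc 0 (n - 1)) (a := ascS n 0 (n - 1) ^ n)
  rw [← shift_pow, ← h1, ← pow_succ, ← pow_succ']

theorem phi_r1 {i : ℕ} (hn : 2 ≤ n) (h₁ : 2 ≤ i) (h₂ : i ≤ n / 2) :
    Sg n 0 * ascS n 0 (n - 1) ^ i * Sg n 0 * dTasc n 0 (n - 1) ^ i
      = ascS n 0 (n - 1) ^ i * Sg n 0 * dTasc n 0 (n - 1) ^ i * Sg n 0 := by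
  have hi : i ≤ n - 2 := by omega
  calc Sg n 0 * ascS n 0 (n - 1) ^ i * Sg n 0 * dTasc n 0 (n - 1) ^ i
      = Sg n 0 * (ascS n 0 (n - 1) ^ i * Sg n 0 * dTasc n 0 (n - 1) ^ i) := by
        simp [mul_assoc]
  _ = Sg n 0 * Sg n i := by rw [conj_s hi]
  _ = Sg n i * Sg n 0 := ss_comm (i := 0) (j := i) (by omega)
  _ = ascS n 0 (n - 1) ^ i * Sg n 0 * dTasc n 0 (n - 1) ^ i * Sg n 0 := by rw [conj_s hi]

theorem phi_r3 {i : ℕ} (hn : 2 ≤ n) (h : i = 0 ∨ (2 ≤ i ∧ i ≤ n - 2)) :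
    Xg n 0 * (ascS n 0 (n - 1) ^ i * Sg n 0 * dTasc n 0 (n - 1) ^ i)
      = ascS n 0 (n - 1) ^ i * Sg n 0 * dTasc n 0 (n - 1) ^ i * Xg n 0 := by
  rw [conj_s (by omega)]
  exact xs_comm (by omega) (by omega)

theorem phi_r4 {i : ℕ} (hn : 2 ≤ n) (h₁ : 2 ≤ i) (h₂ : i ≤ n / 2) :
    Xg n 0 * ascS n 0 (n - 1) ^ i * Xg n 0 * dTasc n 0 (n - 1) ^ i
      = ascS n 0 (n - 1) ^ i * Xg n 0 * dTasc n 0 (n - 1) ^ i * Xg n 0 := by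
  have hi : i ≤ n - 2 := by omega
  calc Xg n 0 * ascS n 0 (n - 1) ^ i * Xg n 0 * dTasc n 0 (n - 1) ^ i
      = Xg n 0 * (ascS n 0 (n - 1) ^ i * Xg n 0 * dTasc n 0 (n - 1) ^ i) := by
        simp [mul_assoc]
  _ = Xg n 0 * Xg n i := by rw [conj_x hi]
  _ = Xg n i * Xg n 0 := xx_comm (i := 0) (j := i) (by omega)
  _ = ascS n 0 (n - 1) ^ i * Xg n 0 * dTasc n 0 (n - 1) ^ i * Xg n 0 := by rw [conj_x hi]

theorem phi_r5 (hn : 2 ≤ n) :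
    ascS n 0 (n - 1) ^ n * Xg n 0 = Xg n 0 * ascS n 0 (n - 1) ^ n := by
  have h := twist (n := n) (n - 1) le_rfl
  rw [show n - 1 + 1 = n by omega] at h
  exact h.symm

theorem phi_r6 (hn : 2 ≤ n) :
    Xg n 0 * ascS n 0 (n - 1) * Sg n 0 * dTasc n 0 (n - 1) * Sg n 0
      = ascS n 0 (n - 1) * Sg n 0 * dTasc n 0 (n - 1) * Sg n 0 * ascS n 0 (n - 1) * Xg n 0
        * dTasc n 0 (n - 1) := by
  by_cases hn3 : 3 ≤ n
  · have hS1 : ascS n 0 (n - 1) * Sg n 0 * dTasc n 0 (n - 1) = Sg n 1 := by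
      have h := conj_s (n := n) (i := 1) (by omega)
      rwa [pow_one, pow_one] at h
    apply cancel_right (ascS_dTasc 0 (n - 1))
    calc Xg n 0 * ascS n 0 (n - 1) * Sg n 0 * dTasc n 0 (n - 1) * Sg n 0 * ascS n 0 (n - 1)
        = Xg n 0 * (ascS n 0 (n - 1) * Sg n 0 * dTasc n 0 (n - 1)) * Sg n 0
            * ascS n 0 (n - 1) := by simp [mul_assoc]
    _ = Xg n 0 * Sg n 1 * Sg n 0 * ascS n 0 (n - 1) := by rw [hS1]
    _ = Sg n 1 * Sg n 0 * Xg n 1 * ascS n 0 (n - 1) := by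
        rw [show Xg n 0 * Sg n 1 * Sg n 0 = Sg n 1 * Sg n 0 * Xg n 1 from
          (mixed₂ (by omega)).symm]
    _ = Sg n 1 * Sg n 0 * (Xg n 1 * ascS n 0 (n - 1)) := by simp [mul_assoc]
    _ = Sg n 1 * Sg n 0 * (ascS n 0 (n - 1) * Xg n 0) := by
        rw [shift_x (by omega) le_rfl]
    _ = (ascS n 0 (n - 1) * Sg n 0 * dTasc n 0 (n - 1)) * Sg n 0 * (ascS n 0 (n - 1) * Xg n 0)
          := by rw [hS1]
    _ = ascS n 0 (n - 1) * Sg n 0 * dTasc n 0 (n - 1) * Sg n 0 * ascS n 0 (n - 1) * Xg n 0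
          * (dTasc n 0 (n - 1) * ascS n 0 (n - 1)) := by
        rw [dTasc_ascS, mul_one]; simp [mul_assoc]
    _ = ascS n 0 (n - 1) * Sg n 0 * dTasc n 0 (n - 1) * Sg n 0 * ascS n 0 (n - 1) * Xg n 0
          * dTasc n 0 (n - 1) * ascS n 0 (n - 1) := by simp [mul_assoc]
  · have h2 : n = 2 := by omega
    subst h2
    have e : (2 : ℕ) - 1 = 1 := by norm_num
    rw [e]
    have hd : ascS 2 0 1 = Sg 2 0 := by rw [ascS, ascS, mul_one]
    have hti : dTasc 2 0 1 = Tg 2 0 := by rw [dTasc, dTasc, one_mul]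
    rw [hd, hti]
    have hx : Xg 2 0 * Sg 2 0 = Sg 2 0 * Xg 2 0 := xs_comm (by omega) (by omega)
    have hxt : Xg 2 0 * Tg 2 0 = Tg 2 0 * Xg 2 0 := xt_comm (by omega) (by omega)
    have ht : Sg 2 0 * Tg 2 0 = 1 := s_t 0
    have hL : Xg 2 0 * Sg 2 0 * Sg 2 0 * Tg 2 0 * Sg 2 0 = Xg 2 0 * (Sg 2 0 * Sg 2 0) := by
      calc Xg 2 0 * Sg 2 0 * Sg 2 0 * Tg 2 0 * Sg 2 0
          = (Xg 2 0 * Sg 2 0) * ((Sg 2 0 * Tg 2 0) * Sg 2 0) := by simp [mul_assoc]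
      _ = (Xg 2 0 * Sg 2 0) * Sg 2 0 := by rw [ht, one_mul]
      _ = Xg 2 0 * (Sg 2 0 * Sg 2 0) := by rw [mul_assoc]
    have hR : Sg 2 0 * Sg 2 0 * Tg 2 0 * Sg 2 0 * Sg 2 0 * Xg 2 0 * Tg 2 0
        = Xg 2 0 * (Sg 2 0 * Sg 2 0) := by
      calc Sg 2 0 * Sg 2 0 * Tg 2 0 * Sg 2 0 * Sg 2 0 * Xg 2 0 * Tg 2 0
          = (Sg 2 0 * (Sg 2 0 * Tg 2 0)) * (Sg 2 0 * (Sg 2 0 * (Xg 2 0 * Tg 2 0))) := by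
            simp [mul_assoc]
      _ = (Sg 2 0 * (Sg 2 0 * Tg 2 0)) * (Sg 2 0 * (Sg 2 0 * (Tg 2 0 * Xg 2 0))) := by
            rw [hxt]
      _ = (Sg 2 0 * 1) * (Sg 2 0 * (Sg 2 0 * (Tg 2 0 * Xg 2 0))) := by rw [ht]
      _ = Sg 2 0 * (Sg 2 0 * ((Sg 2 0 * Tg 2 0) * Xg 2 0)) := by rw [mul_one, mul_assoc]
      _ = Sg 2 0 * (Sg 2 0 * Xg 2 0) := by rw [ht, one_mul]
      _ = Sg 2 0 * (Xg 2 0 * Sg 2 0) := by rw [← hx]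
      _ = (Sg 2 0 * Xg 2 0) * Sg 2 0 := by rw [mul_assoc]
      _ = (Xg 2 0 * Sg 2 0) * Sg 2 0 := by rw [hx]
      _ = Xg 2 0 * (Sg 2 0 * Sg 2 0) := by rw [mul_assoc]
    exact hL.trans hR.symm

end SBAux

theorem conj_comm_flip {M : Type*} [Monoid M] {p q a b : M} (hpq : p * q = 1) (hqp : q * p = 1)
    (h : a * (p * b * q) = (p * b * q) * a) : (q * a * p) * b = b * (q * a * p) := by
  calc (q * a * p) * b = ((q * a * p) * b) * (q * p) := by rw [hqp, mul_one]
  _ = q * (a * (p * b * q)) * p := by simp [mul_assoc]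
  _ = q * ((p * b * q) * a) * p := by rw [h]
  _ = (q * p) * (b * (q * (a * p))) := by simp [mul_assoc]
  _ = b * (q * a * p) := by rw [hqp, one_mul]; simp [mul_assoc]

namespace MAux
open PresentedMonoid

def aM (n : ℕ) : PresentedMonoid (SBTwoRel n) := PresentedMonoid.mk _ (FreeMonoid.of .a)
def aiM (n : ℕ) : PresentedMonoid (SBTwoRel n) := PresentedMonoid.mk _ (FreeMonoid.of .aInv)
def bM (n : ℕ) : PresentedMonoid (SBTwoRel n) := PresentedMonoid.mk _ (FreeMonoid.of .b)
def biM (n : ℕ) : PresentedMonoid (SBTwoRel n) := PresentedMonoid.mk _ (FreeMonoid.of .bInv)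
def yM (n : ℕ) : PresentedMonoid (SBTwoRel n) := PresentedMonoid.mk _ (FreeMonoid.of .y)

variable {n : ℕ}

theorem ha : aM n * aiM n = 1 := by
  simpa [aM, aiM, map_mul] using pm_sound (SBTwoRel.r₇ (n := n))

theorem ha' : aiM n * aM n = 1 := by
  simpa [aM, aiM, map_mul] using pm_sound (SBTwoRel.r₈ (n := n))

theorem hb : bM n * biM n = 1 := by
  simpa [bM, biM, map_mul] using pm_sound (SBTwoRel.r₉ (n := n))

theorem hb' : biM n * bM n = 1 := by
  simpa [bM, biM, map_mul] using pm_sound (SBTwoRel.r₁₀ (n := n))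

theorem hbk (k : ℕ) : bM n ^ k * biM n ^ k = 1 := pair_pow hb hb' k

theorem hbk' (k : ℕ) : biM n ^ k * bM n ^ k = 1 := pair_pow hb' hb k

theorem hr1 (i : ℕ) (h₁ : 2 ≤ i) (h₂ : i ≤ n / 2) :
    aM n * bM n ^ i * aM n * biM n ^ i = bM n ^ i * aM n * biM n ^ i * aM n := by
  simpa [aM, bM, biM, map_mul, map_pow] using pm_sound (SBTwoRel.r₁ (n := n) i h₁ h₂)

theorem hr2 : bM n ^ n = (bM n * aM n) ^ (n - 1) := by
  simpa [aM, bM, map_mul, map_pow] using pm_sound (SBTwoRel.r₂ (n := n))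

theorem hr3 (i : ℕ) (h : i = 0 ∨ (2 ≤ i ∧ i ≤ n - 2)) :
    yM n * (bM n ^ i * aM n * biM n ^ i) = bM n ^ i * aM n * biM n ^ i * yM n := by
  simpa [aM, bM, biM, yM, map_mul, map_pow] using pm_sound (SBTwoRel.r₃ (n := n) i h)

theorem hr4 (i : ℕ) (h₁ : 2 ≤ i) (h₂ : i ≤ n / 2) :
    yM n * bM n ^ i * yM n * biM n ^ i = bM n ^ i * yM n * biM n ^ i * yM n := by
  simpa [bM, biM, yM, map_mul, map_pow] using pm_sound (SBTwoRel.r₄ (n := n) i h₁ h₂)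

theorem hr5 : bM n ^ n * yM n = yM n * bM n ^ n := by
  simpa [bM, yM, map_mul, map_pow] using pm_sound (SBTwoRel.r₅ (n := n))

theorem hr6 : yM n * bM n * aM n * biM n * aM n
    = bM n * aM n * biM n * aM n * bM n * yM n * biM n := by
  simpa [aM, bM, biM, yM, map_mul] using pm_sound (SBTwoRel.r₆ (n := n))

theorem ab_pow (hn : 2 ≤ n) : (aM n * bM n) ^ (n - 1) = bM n ^ n := by
  apply cancel_left (u := bM n) (v := biM n) hb'
  calc bM n * (aM n * bM n) ^ (n - 1) = (bM n * aM n) ^ (n - 1) * bM n := shift_pow _ _ _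
  _ = bM n ^ n * bM n := by rw [← hr2]
  _ = bM n ^ (n + 1) := by rw [← pow_succ]
  _ = bM n * bM n ^ n := by rw [pow_succ']

theorem cenA (hn : 2 ≤ n) : aM n * bM n ^ n = bM n ^ n * aM n := by
  calc aM n * bM n ^ n = aM n * (bM n * aM n) ^ (n - 1) := by rw [hr2]
  _ = (aM n * bM n) ^ (n - 1) * aM n := shift_pow _ _ _
  _ = bM n ^ n * aM n := by rw [ab_pow hn]

theorem cenY : yM n * bM n ^ n = bM n ^ n * yM n := hr5.symm

theorem flip_gen (u : PresentedMonoid (SBTwoRel n)) (hu : u * bM n ^ n = bM n ^ n * u)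
    {k : ℕ} (hk : k ≤ n) :
    bM n ^ k * u * biM n ^ k = biM n ^ (n - k) * u * bM n ^ (n - k) := by
  have e1 : bM n ^ k = biM n ^ (n - k) * bM n ^ n := by
    rw [show bM n ^ n = bM n ^ (n - k) * bM n ^ k from by
      rw [← pow_add, Nat.sub_add_cancel hk], ← mul_assoc, hbk', one_mul]
  have e2 : biM n ^ k = bM n ^ (n - k) * biM n ^ n := by
    rw [show biM n ^ n = biM n ^ (n - k) * biM n ^ k from by
      rw [← pow_add, Nat.sub_add_cancel hk], ← mul_assoc, hbk, one_mul]
  have e3 : bM n ^ n * bM n ^ (n - k) = bM n ^ (n - k) * bM n ^ n := by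
    rw [← pow_add, ← pow_add, Nat.add_comm]
  calc bM n ^ k * u * biM n ^ k
      = biM n ^ (n - k) * (bM n ^ n * u) * (bM n ^ (n - k) * biM n ^ n) := by
        rw [e1, e2]; simp [mul_assoc]
  _ = biM n ^ (n - k) * (u * bM n ^ n) * (bM n ^ (n - k) * biM n ^ n) := by rw [hu]
  _ = biM n ^ (n - k) * u * ((bM n ^ n * bM n ^ (n - k)) * biM n ^ n) := by
      simp [mul_assoc]
  _ = biM n ^ (n - k) * u * (bM n ^ (n - k) * (bM n ^ n * biM n ^ n)) := by
      rw [e3]; simp [mul_assoc]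
  _ = biM n ^ (n - k) * u * bM n ^ (n - k) := by rw [hbk, mul_one]

theorem hr1c (m : ℕ) (h₁ : 2 ≤ m) (h₂ : m ≤ n / 2) :
    aM n * (bM n ^ m * aM n * biM n ^ m) = (bM n ^ m * aM n * biM n ^ m) * aM n := by
  have h := hr1 m h₁ h₂
  calc aM n * (bM n ^ m * aM n * biM n ^ m)
      = aM n * bM n ^ m * aM n * biM n ^ m := by simp [mul_assoc]
  _ = bM n ^ m * aM n * biM n ^ m * aM n := h

theorem hr4c (m : ℕ) (h₁ : 2 ≤ m) (h₂ : m ≤ n / 2) :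
    yM n * (bM n ^ m * yM n * biM n ^ m) = (bM n ^ m * yM n * biM n ^ m) * yM n := by
  have h := hr4 m h₁ h₂
  calc yM n * (bM n ^ m * yM n * biM n ^ m)
      = yM n * bM n ^ m * yM n * biM n ^ m := by simp [mul_assoc]
  _ = bM n ^ m * yM n * biM n ^ m * yM n := h

def cA (n k : ℕ) : PresentedMonoid (SBTwoRel n) := bM n ^ k * aM n * biM n ^ k
def cAi (n k : ℕ) : PresentedMonoid (SBTwoRel n) := bM n ^ k * aiM n * biM n ^ k
def cY (n k : ℕ) : PresentedMonoid (SBTwoRel n) := bM n ^ k * yM n * biM n ^ k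

theorem cA_zero : cA n 0 = aM n := by simp [cA]

theorem cY_zero : cY n 0 = yM n := by simp [cY]

theorem cA_one : cA n 1 = bM n * aM n * biM n := by simp [cA]

theorem cY_one : cY n 1 = bM n * yM n * biM n := by simp [cY]

theorem cm1 (hn : 2 ≤ n) {k : ℕ} (h2 : 2 ≤ k) (hk : k ≤ n - 2) :
    aM n * cA n k = cA n k * aM n := by
  by_cases hhalf : k ≤ n / 2
  · exact hr1c k h2 hhalf
  · have hm1 : 2 ≤ n - k := by omega
    have hm2 : n - k ≤ n / 2 := by omega
    have hflip : cA n k = biM n ^ (n - k) * aM n * bM n ^ (n - k) :=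
      flip_gen (aM n) (cenA hn) (by omega)
    have h := conj_comm_flip (hbk (n := n) (n - k)) (hbk' (n - k)) (hr1c (n - k) hm1 hm2)
    rw [hflip]
    exact h.symm

theorem cm2 {k : ℕ} (h : k = 0 ∨ (2 ≤ k ∧ k ≤ n - 2)) :
    yM n * cA n k = cA n k * yM n := hr3 k h

theorem cm3 (hn : 2 ≤ n) {k : ℕ} (h2 : 2 ≤ k) (hk : k ≤ n - 2) :
    yM n * cY n k = cY n k * yM n := by
  by_cases hhalf : k ≤ n / 2
  · exact hr4c k h2 hhalf
  · have hm1 : 2 ≤ n - k := by omega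
    have hm2 : n - k ≤ n / 2 := by omega
    have hflip : cY n k = biM n ^ (n - k) * yM n * bM n ^ (n - k) :=
      flip_gen (yM n) cenY (by omega)
    have h := conj_comm_flip (hbk (n := n) (n - k)) (hbk' (n - k)) (hr4c (n - k) hm1 hm2)
    rw [hflip]
    exact h.symm

theorem cm2' (hn : 2 ≤ n) {k : ℕ} (h2 : 2 ≤ k) (hk : k ≤ n - 2) :
    cY n k * aM n = aM n * cY n k := by
  have hm : (n - k) = 0 ∨ (2 ≤ n - k ∧ n - k ≤ n - 2) := by omega
  have hflip : cY n k = biM n ^ (n - k) * yM n * bM n ^ (n - k) :=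
    flip_gen (yM n) cenY (by omega)
  have h := conj_comm_flip (hbk (n := n) (n - k)) (hbk' (n - k)) (cm2 hm)
  rw [hflip]
  exact h

end MAux

namespace MAux

variable {n : ℕ}

def seg (n : ℕ) : ℕ → ℕ → PresentedMonoid (SBTwoRel n)
  | _, 0 => 1
  | a, j + 1 => cA n a * seg n (a + 1) j

def segi (n : ℕ) : ℕ → ℕ → PresentedMonoid (SBTwoRel n)
  | _, 0 => 1
  | a, j + 1 => segi n (a + 1) j * cAi n a

theorem cA_cAi (a : ℕ) : cA n a * cAi n a = 1 := by
  show (bM n ^ a * aM n * biM n ^ a) * (bM n ^ a * aiM n * biM n ^ a) = 1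
  calc (bM n ^ a * aM n * biM n ^ a) * (bM n ^ a * aiM n * biM n ^ a)
      = bM n ^ a * aM n * (biM n ^ a * bM n ^ a) * (aiM n * biM n ^ a) := by simp [mul_assoc]
  _ = bM n ^ a * (aM n * aiM n) * biM n ^ a := by rw [hbk']; simp [mul_assoc]
  _ = 1 := by rw [ha, mul_one, hbk]

theorem cAi_cA (a : ℕ) : cAi n a * cA n a = 1 := by
  show (bM n ^ a * aiM n * biM n ^ a) * (bM n ^ a * aM n * biM n ^ a) = 1
  calc (bM n ^ a * aiM n * biM n ^ a) * (bM n ^ a * aM n * biM n ^ a)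
      = bM n ^ a * aiM n * (biM n ^ a * bM n ^ a) * (aM n * biM n ^ a) := by simp [mul_assoc]
  _ = bM n ^ a * (aiM n * aM n) * biM n ^ a := by rw [hbk']; simp [mul_assoc]
  _ = 1 := by rw [ha', mul_one, hbk]

theorem seg_segi (a j : ℕ) : seg n a j * segi n a j = 1 := by
  induction j generalizing a with
  | zero => simp [seg, segi]
  | succ j ih =>
    rw [seg, segi]
    calc cA n a * seg n (a + 1) j * (segi n (a + 1) j * cAi n a)
        = cA n a * (seg n (a + 1) j * segi n (a + 1) j) * cAi n a := by simp [mul_assoc]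
    _ = 1 := by rw [ih, mul_one, cA_cAi]

theorem segi_seg (a j : ℕ) : segi n a j * seg n a j = 1 := by
  induction j generalizing a with
  | zero => simp [seg, segi]
  | succ j ih =>
    rw [seg, segi]
    calc segi n (a + 1) j * cAi n a * (cA n a * seg n (a + 1) j)
        = segi n (a + 1) j * (cAi n a * cA n a) * seg n (a + 1) j := by simp [mul_assoc]
    _ = 1 := by rw [cAi_cA, mul_one, ih]

theorem seg_snoc (a j : ℕ) : seg n a (j + 1) = seg n a j * cA n (a + j) := by
  induction j generalizing a with
  | zero => simp [seg]
  | succ j ih =>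
    have e : a + 1 + j = a + (j + 1) := by omega
    rw [seg, ih (a + 1), e, seg, mul_assoc]

theorem seg_tele (m : ℕ) : seg n 0 m = (aM n * bM n) ^ m * biM n ^ m := by
  induction m with
  | zero => simp [seg]
  | succ m ih =>
    rw [seg_snoc, Nat.zero_add, ih]
    show (aM n * bM n) ^ m * biM n ^ m * (bM n ^ m * aM n * biM n ^ m) = _
    calc (aM n * bM n) ^ m * biM n ^ m * (bM n ^ m * aM n * biM n ^ m)
        = (aM n * bM n) ^ m * ((biM n ^ m * bM n ^ m) * (aM n * biM n ^ m)) := by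
          simp [mul_assoc]
    _ = (aM n * bM n) ^ m * (aM n * biM n ^ m) := by rw [hbk', one_mul]
    _ = (aM n * bM n) ^ m * (aM n * (bM n * biM n) * biM n ^ m) := by
        rw [hb, mul_one]
    _ = ((aM n * bM n) ^ m * (aM n * bM n)) * (biM n * biM n ^ m) := by simp [mul_assoc]
    _ = (aM n * bM n) ^ (m + 1) * biM n ^ (m + 1) := by rw [← pow_succ, ← pow_succ']

theorem seg_B (hn : 2 ≤ n) : seg n 0 (n - 1) = bM n := by
  rw [seg_tele, ab_pow hn]
  calc bM n ^ n * biM n ^ (n - 1)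
      = (bM n * bM n ^ (n - 1)) * biM n ^ (n - 1) := by
        rw [← pow_succ', show n - 1 + 1 = n by omega]
  _ = bM n * (bM n ^ (n - 1) * biM n ^ (n - 1)) := by rw [mul_assoc]
  _ = bM n := by rw [hbk, mul_one]

theorem Y_seg (a j : ℕ) (h2 : 2 ≤ a) (hj : a + j ≤ n - 1) :
    yM n * seg n a j = seg n a j * yM n := by
  induction j generalizing a with
  | zero => simp [seg]
  | succ j ih =>
    rw [seg, ← mul_assoc, cm2 (Or.inr ⟨h2, by omega⟩), mul_assoc, ih (a + 1) (by omega)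
      (by omega), mul_assoc]

theorem A_seg (hn : 2 ≤ n) (a j : ℕ) (h2 : 2 ≤ a) (hj : a + j ≤ n - 1) :
    aM n * seg n a j = seg n a j * aM n := by
  induction j generalizing a with
  | zero => simp [seg]
  | succ j ih =>
    rw [seg, ← mul_assoc, cm1 hn h2 (by omega), mul_assoc, ih (a + 1) (by omega)
      (by omega), mul_assoc]

theorem seg_decomp (m : ℕ) (hm : n - 1 = m + 2) :
    bM n = aM n * (cA n 1 * seg n 2 m) := by
  have h := seg_B (n := n) (by omega)
  rw [hm] at h
  rw [← h, seg, seg, cA_zero]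

theorem aiB (m : ℕ) (hm : n - 1 = m + 2) : aiM n * bM n = cA n 1 * seg n 2 m := by
  rw [seg_decomp m hm, ← mul_assoc, ha', one_mul]

theorem braid_base (hn3 : 3 ≤ n) :
    aM n * cA n 1 * aM n = cA n 1 * aM n * cA n 1 := by
  obtain ⟨m, hm⟩ : ∃ m, n - 1 = m + 2 := ⟨n - 3, by omega⟩
  apply cancel_right (seg_segi 2 m)
  have hAS : aM n * seg n 2 m = seg n 2 m * aM n :=
    A_seg (by omega) 2 m le_rfl (by omega)
  have hL : aM n * cA n 1 * aM n * seg n 2 m = bM n * aM n := by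
    calc aM n * cA n 1 * aM n * seg n 2 m
        = aM n * cA n 1 * (aM n * seg n 2 m) := by rw [mul_assoc]
    _ = aM n * cA n 1 * (seg n 2 m * aM n) := by rw [hAS]
    _ = aM n * (cA n 1 * seg n 2 m) * aM n := by simp [mul_assoc]
    _ = aM n * (aiM n * bM n) * aM n := by rw [aiB m hm]
    _ = (aM n * aiM n) * (bM n * aM n) := by simp [mul_assoc]
    _ = bM n * aM n := by rw [ha, one_mul]
  have hR : cA n 1 * aM n * cA n 1 * seg n 2 m = bM n * aM n := by
    calc cA n 1 * aM n * cA n 1 * seg n 2 m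
        = cA n 1 * aM n * (cA n 1 * seg n 2 m) := by rw [mul_assoc]
    _ = cA n 1 * aM n * (aiM n * bM n) := by rw [aiB m hm]
    _ = cA n 1 * ((aM n * aiM n) * bM n) := by simp [mul_assoc]
    _ = cA n 1 * bM n := by rw [ha, one_mul]
    _ = bM n * aM n * (biM n * bM n) := by rw [cA_one]; simp [mul_assoc]
    _ = bM n * aM n := by rw [hb', mul_one]
  exact hL.trans hR.symm

end MAux

namespace MAux

variable {n : ℕ}

theorem U_comm : yM n * (cA n 1 * aM n * bM n) = (cA n 1 * aM n * bM n) * yM n := by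
  rw [cA_one]
  calc yM n * (bM n * aM n * biM n * aM n * bM n)
      = (yM n * bM n * aM n * biM n * aM n) * bM n := by simp [mul_assoc]
  _ = (bM n * aM n * biM n * aM n * bM n * yM n * biM n) * bM n := by rw [hr6]
  _ = (bM n * aM n * biM n * aM n * bM n) * yM n * (biM n * bM n) := by simp [mul_assoc]
  _ = bM n * aM n * biM n * aM n * bM n * yM n := by rw [hb', mul_one]

theorem WQ (m : ℕ) (hm : n - 1 = m + 2) :
    (cA n 1 * aM n * aM n * cA n 1) * seg n 2 m = cA n 1 * aM n * bM n := by
  calc (cA n 1 * aM n * aM n * cA n 1) * seg n 2 m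
      = cA n 1 * aM n * (aM n * (cA n 1 * seg n 2 m)) := by simp [mul_assoc]
  _ = cA n 1 * aM n * (aM n * (aiM n * bM n)) := by rw [aiB m hm]
  _ = cA n 1 * aM n * ((aM n * aiM n) * bM n) := by simp [mul_assoc]
  _ = cA n 1 * aM n * bM n := by rw [ha, one_mul]

theorem YW (hn3 : 3 ≤ n) :
    yM n * (cA n 1 * aM n * aM n * cA n 1) = (cA n 1 * aM n * aM n * cA n 1) * yM n := by
  obtain ⟨m, hm⟩ : ∃ m, n - 1 = m + 2 := ⟨n - 3, by omega⟩
  apply cancel_right (seg_segi 2 m)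
  have hYQ : yM n * seg n 2 m = seg n 2 m * yM n := Y_seg 2 m le_rfl (by omega)
  calc yM n * (cA n 1 * aM n * aM n * cA n 1) * seg n 2 m
      = yM n * ((cA n 1 * aM n * aM n * cA n 1) * seg n 2 m) := by rw [mul_assoc]
  _ = yM n * (cA n 1 * aM n * bM n) := by rw [WQ m hm]
  _ = (cA n 1 * aM n * bM n) * yM n := U_comm
  _ = ((cA n 1 * aM n * aM n * cA n 1) * seg n 2 m) * yM n := by rw [WQ m hm]
  _ = (cA n 1 * aM n * aM n * cA n 1) * (yM n * seg n 2 m) := by rw [mul_assoc, ← hYQ]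
  _ = (cA n 1 * aM n * aM n * cA n 1) * yM n * seg n 2 m := by rw [← mul_assoc]

theorem mixed2_base : cA n 1 * aM n * cY n 1 = yM n * cA n 1 * aM n := by
  rw [cA_one, cY_one]
  have h := hr6 (n := n)
  simp only [mul_assoc] at h ⊢
  exact h.symm

theorem mixed1_base (hn3 : 3 ≤ n) :
    aM n * cA n 1 * yM n = cY n 1 * aM n * cA n 1 := by
  have hvu : (aiM n * cAi n 1) * (cA n 1 * aM n) = 1 := by
    calc (aiM n * cAi n 1) * (cA n 1 * aM n)
        = aiM n * ((cAi n 1 * cA n 1) * aM n) := by simp [mul_assoc]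
    _ = 1 := by rw [cAi_cA, one_mul, ha']
  apply cancel_left hvu
  calc (cA n 1 * aM n) * (aM n * cA n 1 * yM n)
      = (cA n 1 * aM n * aM n * cA n 1) * yM n := by simp [mul_assoc]
  _ = yM n * (cA n 1 * aM n * aM n * cA n 1) := (YW hn3).symm
  _ = (yM n * cA n 1 * aM n) * (aM n * cA n 1) := by simp [mul_assoc]
  _ = (cA n 1 * aM n * cY n 1) * (aM n * cA n 1) := by rw [mixed2_base]
  _ = (cA n 1 * aM n) * (cY n 1 * aM n * cA n 1) := by simp [mul_assoc]

theorem conj_mul2 (i : ℕ) (u v : PresentedMonoid (SBTwoRel n)) :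
    (bM n ^ i * u * biM n ^ i) * (bM n ^ i * v * biM n ^ i) = bM n ^ i * (u * v) * biM n ^ i := by
  calc (bM n ^ i * u * biM n ^ i) * (bM n ^ i * v * biM n ^ i)
      = bM n ^ i * (u * ((biM n ^ i * bM n ^ i) * (v * biM n ^ i))) := by simp [mul_assoc]
  _ = bM n ^ i * (u * (v * biM n ^ i)) := by rw [hbk', one_mul]
  _ = bM n ^ i * (u * v) * biM n ^ i := by simp [mul_assoc]

theorem conj_comm (i : ℕ) {u v : PresentedMonoid (SBTwoRel n)} (h : u * v = v * u) :
    (bM n ^ i * u * biM n ^ i) * (bM n ^ i * v * biM n ^ i)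
      = (bM n ^ i * v * biM n ^ i) * (bM n ^ i * u * biM n ^ i) := by
  rw [conj_mul2, conj_mul2, h]

theorem conj3 (i : ℕ) (u v w : PresentedMonoid (SBTwoRel n)) :
    (bM n ^ i * u * biM n ^ i) * (bM n ^ i * v * biM n ^ i) * (bM n ^ i * w * biM n ^ i)
      = bM n ^ i * (u * v * w) * biM n ^ i := by
  rw [conj_mul2, conj_mul2]

theorem conj_add (u : PresentedMonoid (SBTwoRel n)) (i k : ℕ) :
    bM n ^ (i + k) * u * biM n ^ (i + k) = bM n ^ i * (bM n ^ k * u * biM n ^ k) * biM n ^ i := by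
  have e : biM n ^ (i + k) = biM n ^ k * biM n ^ i := by rw [← pow_add, Nat.add_comm]
  rw [pow_add, e]
  simp [mul_assoc]

theorem cA_add (i k : ℕ) : cA n (i + k) = bM n ^ i * cA n k * biM n ^ i := conj_add (aM n) i k

theorem cY_add (i k : ℕ) : cY n (i + k) = bM n ^ i * cY n k * biM n ^ i := conj_add (yM n) i k

theorem psi_ss (hn : 2 ≤ n) {i j : ℕ} (hij : i + 1 < j) (hj : j ≤ n - 2) :
    cA n i * cA n j = cA n j * cA n i := by
  obtain ⟨k, rfl⟩ : ∃ k, j = i + k := ⟨j - i, by omega⟩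
  rw [cA_add i k]
  exact conj_comm i (cm1 hn (by omega) (by omega))

theorem psi_xx (hn : 2 ≤ n) {i j : ℕ} (hij : i + 1 < j) (hj : j ≤ n - 2) :
    cY n i * cY n j = cY n j * cY n i := by
  obtain ⟨k, rfl⟩ : ∃ k, j = i + k := ⟨j - i, by omega⟩
  rw [cY_add i k]
  exact conj_comm i (cm3 hn (by omega) (by omega))

theorem psi_xs (hn : 2 ≤ n) {i j : ℕ} (h1 : i ≠ j + 1) (h2 : j ≠ i + 1) (hj : j ≤ n - 2)
    (hi : i ≤ n - 2) : cY n i * cA n j = cA n j * cY n i := by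
  rcases lt_trichotomy i j with h | h | h
  · obtain ⟨k, rfl⟩ : ∃ k, j = i + k := ⟨j - i, by omega⟩
    rw [cA_add i k]
    exact conj_comm i (cm2 (Or.inr ⟨by omega, by omega⟩))
  · subst h
    have hya : yM n * aM n = aM n * yM n := by
      have h0 := cm2 (n := n) (Or.inl rfl)
      rwa [cA_zero] at h0
    exact conj_comm i hya
  · obtain ⟨k, rfl⟩ : ∃ k, i = j + k := ⟨i - j, by omega⟩
    rw [cY_add j k]
    exact conj_comm j (cm2' hn (by omega) (by omega))

theorem psi_braid {i : ℕ} (h : i + 2 ≤ n - 1) :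
    cA n i * cA n (i + 1) * cA n i = cA n (i + 1) * cA n i * cA n (i + 1) := by
  rw [cA_add i 1]
  calc cA n i * (bM n ^ i * cA n 1 * biM n ^ i) * cA n i
      = bM n ^ i * (aM n * cA n 1 * aM n) * biM n ^ i := conj3 i (aM n) (cA n 1) (aM n)
  _ = bM n ^ i * (cA n 1 * aM n * cA n 1) * biM n ^ i := by rw [braid_base (by omega)]
  _ = (bM n ^ i * cA n 1 * biM n ^ i) * cA n i * (bM n ^ i * cA n 1 * biM n ^ i) :=
      (conj3 i (cA n 1) (aM n) (cA n 1)).symm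

theorem psi_m1 {i : ℕ} (h : i + 2 ≤ n - 1) :
    cA n i * cA n (i + 1) * cY n i = cY n (i + 1) * cA n i * cA n (i + 1) := by
  rw [cA_add i 1, cY_add i 1]
  calc cA n i * (bM n ^ i * cA n 1 * biM n ^ i) * cY n i
      = bM n ^ i * (aM n * cA n 1 * yM n) * biM n ^ i := conj3 i (aM n) (cA n 1) (yM n)
  _ = bM n ^ i * (cY n 1 * aM n * cA n 1) * biM n ^ i := by rw [mixed1_base (by omega)]
  _ = (bM n ^ i * cY n 1 * biM n ^ i) * cA n i * (bM n ^ i * cA n 1 * biM n ^ i) :=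
      (conj3 i (cY n 1) (aM n) (cA n 1)).symm

theorem psi_m2 {i : ℕ} (h : i + 2 ≤ n - 1) :
    cA n (i + 1) * cA n i * cY n (i + 1) = cY n i * cA n (i + 1) * cA n i := by
  rw [cA_add i 1, cY_add i 1]
  calc (bM n ^ i * cA n 1 * biM n ^ i) * cA n i * (bM n ^ i * cY n 1 * biM n ^ i)
      = bM n ^ i * (cA n 1 * aM n * cY n 1) * biM n ^ i := conj3 i (cA n 1) (aM n) (cY n 1)
  _ = bM n ^ i * (yM n * cA n 1 * aM n) * biM n ^ i := by rw [mixed2_base]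
  _ = cY n i * (bM n ^ i * cA n 1 * biM n ^ i) * cA n i :=
      (conj3 i (yM n) (cA n 1) (aM n)).symm

theorem psi_inv_r (i : ℕ) : cA n i * cAi n i = 1 := cA_cAi i

theorem psi_inv_l (i : ℕ) : cAi n i * cA n i = 1 := cAi_cA i

end MAux

namespace SBAux

variable {n : ℕ}

theorem ofFn_Sg (m : ℕ) : ∀ a : ℕ,
    (List.ofFn (fun i : Fin m => Sg n (a + i.val))).prod = ascS n a m := by
  induction m with
  | zero => intro a; simp [ascS]
  | succ m ih =>
    intro a
    rw [List.ofFn_succ, List.prod_cons, ascS]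
    have he : (fun i : Fin m => Sg n (a + (i.succ).val))
        = fun i : Fin m => Sg n (a + 1 + i.val) := by
      funext i
      congr 1
      simp only [Fin.val_succ]
      omega
    rw [he, ih (a + 1)]
    congr 2

theorem ofFn_Tg (m : ℕ) : ∀ a : ℕ,
    ((List.ofFn (fun i : Fin m => Tg n (a + i.val))).reverse).prod = dTasc n a m := by
  induction m with
  | zero => intro a; simp [dTasc]
  | succ m ih =>
    intro a
    rw [List.ofFn_succ, List.reverse_cons, List.prod_append, List.prod_cons, List.prod_nil,
      mul_one, dTasc]
    have he : (fun i : Fin m => Tg n (a + (i.succ).val))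
        = fun i : Fin m => Tg n (a + 1 + i.val) := by
      funext i
      congr 1
      simp only [Fin.val_succ]
      omega
    rw [he, ih (a + 1)]
    congr 2

end SBAux

section Assemble

open SBAux MAux

def fphi (n : ℕ) : SBTwoGen → SingularBraidMonoid n
  | .a => Sg n 0
  | .aInv => Tg n 0
  | .b => ascS n 0 (n - 1)
  | .bInv => dTasc n 0 (n - 1)
  | .y => Xg n 0

def fpsi (n : ℕ) : SBGen n → PresentedMonoid (SBTwoRel n)
  | .s i => cA n i.val
  | .sInv i => cAi n i.val
  | .x i => cY n i.val

theorem hphi (n : ℕ) (hn : 2 ≤ n) : ∀ a b, SBTwoRel n a b →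
    FreeMonoid.lift (fphi n) a = FreeMonoid.lift (fphi n) b := by
  intro a b h
  cases h with
  | r₁ i h₁ h₂ =>
    simp only [map_mul, map_pow, FreeMonoid.lift_eval_of, fphi]
    exact phi_r1 hn h₁ h₂
  | r₂ =>
    simp only [map_mul, map_pow, FreeMonoid.lift_eval_of, fphi]
    exact r2img hn
  | r₃ i h =>
    simp only [map_mul, map_pow, FreeMonoid.lift_eval_of, fphi]
    exact phi_r3 hn h
  | r₄ i h₁ h₂ =>
    simp only [map_mul, map_pow, FreeMonoid.lift_eval_of, fphi]
    exact phi_r4 hn h₁ h₂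
  | r₅ =>
    simp only [map_mul, map_pow, FreeMonoid.lift_eval_of, fphi]
    exact phi_r5 hn
  | r₆ =>
    simp only [map_mul, map_pow, FreeMonoid.lift_eval_of, fphi]
    exact phi_r6 hn
  | r₇ =>
    simp only [map_mul, map_one, FreeMonoid.lift_eval_of, fphi]
    exact s_t 0
  | r₈ =>
    simp only [map_mul, map_one, FreeMonoid.lift_eval_of, fphi]
    exact t_s 0
  | r₉ =>
    simp only [map_mul, map_one, FreeMonoid.lift_eval_of, fphi]
    exact ascS_dTasc 0 (n - 1)
  | r₁₀ =>
    simp only [map_mul, map_one, FreeMonoid.lift_eval_of, fphi]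
    exact dTasc_ascS 0 (n - 1)

theorem hpsi (n : ℕ) (hn : 2 ≤ n) : ∀ a b, SBRel n a b →
    FreeMonoid.lift (fpsi n) a = FreeMonoid.lift (fpsi n) b := by
  intro a b h
  cases h with
  | comm_ss i j hij =>
    simp only [map_mul, FreeMonoid.lift_eval_of, fpsi]
    exact psi_ss hn hij (by have := j.isLt; omega)
  | comm_xx i j hij =>
    simp only [map_mul, FreeMonoid.lift_eval_of, fpsi]
    exact psi_xx hn hij (by have := j.isLt; omega)
  | comm_xs i j h1 h2 =>
    simp only [map_mul, FreeMonoid.lift_eval_of, fpsi]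
    exact psi_xs hn h1 h2 (by have := j.isLt; omega) (by have := i.isLt; omega)
  | braid i h =>
    simp only [map_mul, FreeMonoid.lift_eval_of, fpsi]
    exact psi_braid (by omega)
  | mixed₁ i h =>
    simp only [map_mul, FreeMonoid.lift_eval_of, fpsi]
    exact psi_m1 (by omega)
  | mixed₂ i h =>
    simp only [map_mul, FreeMonoid.lift_eval_of, fpsi]
    exact psi_m2 (by omega)
  | inv_right i =>
    simp only [map_mul, map_one, FreeMonoid.lift_eval_of, fpsi]
    exact psi_inv_r i.val
  | inv_left i =>
    simp only [map_mul, map_one, FreeMonoid.lift_eval_of, fpsi]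
    exact psi_inv_l i.val

def phiH (n : ℕ) (hn : 2 ≤ n) : PresentedMonoid (SBTwoRel n) →* SingularBraidMonoid n :=
  PresentedMonoid.lift (fphi n) (hphi n hn)

def psiH (n : ℕ) (hn : 2 ≤ n) : SingularBraidMonoid n →* PresentedMonoid (SBTwoRel n) :=
  PresentedMonoid.lift (fpsi n) (hpsi n hn)

theorem psiH_Sg (n : ℕ) (hn : 2 ≤ n) {a : ℕ} (ha : a < n - 1) :
    psiH n hn (Sg n a) = cA n a := by
  rw [Sg, dif_pos ha]
  rfl

theorem psiH_asc (n : ℕ) (hn : 2 ≤ n) (m : ℕ) : ∀ a, a + m ≤ n - 1 →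
    psiH n hn (ascS n a m) = seg n a m := by
  induction m with
  | zero => intro a _; rw [ascS, seg, map_one]
  | succ m ih =>
    intro a ha
    rw [ascS, seg, map_mul, ih (a + 1) (by omega), psiH_Sg n hn (by omega)]

theorem psiH_del (n : ℕ) (hn : 2 ≤ n) : psiH n hn (ascS n 0 (n - 1)) = bM n := by
  rw [psiH_asc n hn (n - 1) 0 (by omega), seg_B hn]

theorem psiH_dti (n : ℕ) (hn : 2 ≤ n) : psiH n hn (dTasc n 0 (n - 1)) = biM n := by
  have h1 : bM n * psiH n hn (dTasc n 0 (n - 1)) = 1 := by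
    rw [← psiH_del n hn, ← map_mul, ascS_dTasc, map_one]
  exact inv_uniq h1 hb'

theorem psi_phi (n : ℕ) (hn : 2 ≤ n) :
    (psiH n hn).comp (phiH n hn) = MonoidHom.id _ := by
  apply PresentedMonoid.ext
  intro x
  rw [MonoidHom.comp_apply, MonoidHom.id_apply]
  cases x with
  | a =>
    show psiH n hn (Sg n 0) = PresentedMonoid.of (SBTwoRel n) SBTwoGen.a
    rw [psiH_Sg n hn (by omega)]
    rw [show PresentedMonoid.of (SBTwoRel n) SBTwoGen.a = aM n from rfl, ← cA_zero]
  | aInv =>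
    show psiH n hn (Tg n 0) = PresentedMonoid.of (SBTwoRel n) SBTwoGen.aInv
    rw [Tg, dif_pos (show 0 < n - 1 by omega)]
    show cAi n 0 = aiM n
    simp [cAi]
  | b =>
    show psiH n hn (ascS n 0 (n - 1)) = PresentedMonoid.of (SBTwoRel n) SBTwoGen.b
    rw [psiH_del n hn]
    rfl
  | bInv =>
    show psiH n hn (dTasc n 0 (n - 1)) = PresentedMonoid.of (SBTwoRel n) SBTwoGen.bInv
    rw [psiH_dti n hn]
    rfl
  | y =>
    show psiH n hn (Xg n 0) = PresentedMonoid.of (SBTwoRel n) SBTwoGen.y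
    rw [Xg, dif_pos (show 0 < n - 1 by omega)]
    show cY n 0 = yM n
    exact cY_zero

theorem phi_psi (n : ℕ) (hn : 2 ≤ n) :
    (phiH n hn).comp (psiH n hn) = MonoidHom.id _ := by
  apply PresentedMonoid.ext
  intro x
  show phiH n hn (psiH n hn (PresentedMonoid.of (SBRel n) x)) = PresentedMonoid.of (SBRel n) x
  have hbimg : phiH n hn (bM n) = ascS n 0 (n - 1) := rfl
  have hbiimg : phiH n hn (biM n) = dTasc n 0 (n - 1) := rfl
  cases x with
  | s i =>
    show phiH n hn (cA n i.val) = PresentedMonoid.of (SBRel n) (SBGen.s i)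
    rw [show cA n i.val = bM n ^ i.val * aM n * biM n ^ i.val from rfl, map_mul, map_mul,
      map_pow, map_pow, hbimg, hbiimg]
    rw [show phiH n hn (aM n) = Sg n 0 from rfl]
    rw [conj_s (show i.val ≤ n - 2 by have := i.isLt; omega)]
    rw [Sg, dif_pos i.isLt]
  | sInv i =>
    show phiH n hn (cAi n i.val) = PresentedMonoid.of (SBRel n) (SBGen.sInv i)
    rw [show cAi n i.val = bM n ^ i.val * aiM n * biM n ^ i.val from rfl, map_mul, map_mul,
      map_pow, map_pow, hbimg, hbiimg]
    rw [show phiH n hn (aiM n) = Tg n 0 from rfl]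
    rw [conj_t (show i.val ≤ n - 2 by have := i.isLt; omega)]
    rw [Tg, dif_pos i.isLt]
  | x i =>
    show phiH n hn (cY n i.val) = PresentedMonoid.of (SBRel n) (SBGen.x i)
    rw [show cY n i.val = bM n ^ i.val * yM n * biM n ^ i.val from rfl, map_mul, map_mul,
      map_pow, map_pow, hbimg, hbiimg]
    rw [show phiH n hn (yM n) = Xg n 0 from rfl]
    rw [conj_x (show i.val ≤ n - 2 by have := i.isLt; omega)]
    rw [Xg, dif_pos i.isLt]

end Assemble

/-- `SB_n` has the Artin-style presentation with generators `σ₁, σ₁⁻¹, σ, σ⁻¹, x₁`;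
the isomorphism sends `σ₁ ↦ σ₁`, `σ₁⁻¹ ↦ σ₁⁻¹`, `σ ↦ σ₁σ₂⋯σ_{n-1}`,
`σ⁻¹ ↦ σ_{n-1}⁻¹⋯σ₁⁻¹` and `x₁ ↦ x₁` (so that `σᵢ ↦ σ^{i-1}σ₁σ^{1-i}` and
`xᵢ ↦ σ^{i-1}x₁σ^{1-i}` under the inverse isomorphism). -/
theorem artin_style_presentation_of_singular_braid_monoid (n : ℕ) (hn : 2 ≤ n) :
    ∃ e : PresentedMonoid (SBTwoRel n) ≃* SingularBraidMonoid n,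
      e (PresentedMonoid.of (SBTwoRel n) .a) =
        PresentedMonoid.of (SBRel n) (.s ⟨0, by omega⟩) ∧
      e (PresentedMonoid.of (SBTwoRel n) .aInv) =
        PresentedMonoid.of (SBRel n) (.sInv ⟨0, by omega⟩) ∧
      e (PresentedMonoid.of (SBTwoRel n) .b) =
        PresentedMonoid.mk (SBRel n)
          ((List.ofFn (fun j : Fin (n - 1) => FreeMonoid.of (SBGen.s j))).prod) ∧
      e (PresentedMonoid.of (SBTwoRel n) .bInv) =
        PresentedMonoid.mk (SBRel n)
          ((List.ofFn (fun j : Fin (n - 1) => FreeMonoid.of (SBGen.sInv j))).reverse.prod) ∧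
      e (PresentedMonoid.of (SBTwoRel n) .y) =
        PresentedMonoid.of (SBRel n) (.x ⟨0, by omega⟩) := by
  refine ⟨MonoidHom.toMulEquiv (phiH n hn) (psiH n hn) (psi_phi n hn) (phi_psi n hn),
    ?_, ?_, ?_, ?_, ?_⟩
  · show SBAux.Sg n 0 = _
    rw [SBAux.Sg, dif_pos (show 0 < n - 1 by omega)]
  · show SBAux.Tg n 0 = _
    rw [SBAux.Tg, dif_pos (show 0 < n - 1 by omega)]
  · show SBAux.ascS n 0 (n - 1) = _
    have h := SBAux.ofFn_Sg (n := n) (n - 1) 0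
    simp only [Nat.zero_add] at h
    rw [← h, map_list_prod, List.map_ofFn]
    have hf : (fun i : Fin (n - 1) => SBAux.Sg n i.val)
        = (⇑(PresentedMonoid.mk (SBRel n)) ∘ fun j : Fin (n - 1) => FreeMonoid.of (SBGen.s j))
        := by
      funext j
      show SBAux.Sg n j.val = _
      rw [SBAux.Sg, dif_pos j.isLt]
      rfl
    rw [hf]
    rfl
  · show SBAux.dTasc n 0 (n - 1) = _
    have h := SBAux.ofFn_Tg (n := n) (n - 1) 0
    simp only [Nat.zero_add] at h
    rw [← h, map_list_prod, List.map_reverse, List.map_ofFn]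
    have hf : (fun i : Fin (n - 1) => SBAux.Tg n i.val)
        = (⇑(PresentedMonoid.mk (SBRel n)) ∘ fun j : Fin (n - 1) => FreeMonoid.of (SBGen.sInv j))
        := by
      funext j
      show SBAux.Tg n j.val = _
      rw [SBAux.Tg, dif_pos j.isLt]
      rfl
    rw [hf]
    rfl
  · show SBAux.Xg n 0 = _
    rw [SBAux.Xg, dif_pos (show 0 < n - 1 by omega)]
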